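/- arXiv:1307.2275 — 3 statements merged into one kernel-verified Lean document; each statement's English description precedes it below -/
import Mathlib

section
/- Let d ≥ 1, γ > 0, T > 0, and let f ∈ C¹(ℝ^d × [0,T]) be nonnegative and satisfy pointwise ∂_τ f(v,τ) = div_v(v f(v,τ)(1 + f(v,τ)^γ)). Define, for t ∈ [0, (e^{dγT} − 1)/(dγ)], τ(t) = (dγ)^{-1} log(1 + dγ t) and ρ(x,t) = e^{−d τ(t)} f(e^{−τ(t)} x, τ(t)). Then ρ is C¹ and satisfies pointwise ∂_t ρ(x,t) − div_x(x ρ(x,t)^{1+γ}) = 0, with ρ(·,0) = f(·,0). -/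
/-!
Choose the time change so that `τ' = e^{-dγτ}`, i.e. `τ(t) = (dγ)⁻¹ log(1 + dγt)`. Differentiating
`ρ = e^{-dτ} f(e^{-τ}x, τ)` in `t` gives `τ' e^{-dτ} (∂_τ f - d f - v·∇f)` at `v = e^{-τ}x`, and
expanding `∂_τ f = div(v f(1 + f^γ)) = d(f + f^{1+γ}) + (1 + (1+γ) f^γ) v·∇f` leaves
`τ' e^{-dτ} (d f^{1+γ} + (1+γ) f^γ v·∇f)`: the linear drift is absorbed by the rescaling. Since
`(e^{-dτ})^γ = τ'`, this is exactly `div(x ρ^{1+γ}) = d ρ^{1+γ} + (1+γ) ρ^γ x·∇ρ`.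
-/

open Real Set

/-- The divergence of a vector field `V : ℝ^d → ℝ^d` at a point, as the trace of its
(Fréchet) derivative. -/
noncomputable def diverg {d : ℕ} (V : EuclideanSpace ℝ (Fin d) → EuclideanSpace ℝ (Fin d))
    (v : EuclideanSpace ℝ (Fin d)) : ℝ :=
  LinearMap.trace ℝ (EuclideanSpace ℝ (Fin d)) (fderiv ℝ V v).toLinearMap

section Divergence

variable {d : ℕ} {g : EuclideanSpace ℝ (Fin d) → ℝ}
  {L : EuclideanSpace ℝ (Fin d) →L[ℝ] ℝ} {v : EuclideanSpace ℝ (Fin d)} {γ : ℝ}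

theorem diverg_smul_id (hg : HasFDerivAt g L v) :
    diverg (fun w => g w • w) v = d * g v + L v := by
  have hD : HasFDerivAt (fun w => g w • w)
      (g v • ContinuousLinearMap.id ℝ _ + L.smulRight v) v :=
    hg.smul (hasFDerivAt_id v)
  have hrank_one : LinearMap.trace ℝ (EuclideanSpace ℝ (Fin d)) (L.smulRight v) = L v :=
    LinearMap.trace_smulRight (L : EuclideanSpace ℝ (Fin d) →ₗ[ℝ] ℝ) v
  rw [diverg, hD.fderiv, ContinuousLinearMap.toLinearMap_add, map_add,
    ContinuousLinearMap.toLinearMap_smul, map_smul, ContinuousLinearMap.coe_id, LinearMap.trace_id,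
    finrank_euclideanSpace_fin, hrank_one, smul_eq_mul, mul_comm]

theorem diverg_rpow_smul_id (hg : HasFDerivAt g L v) (hγ : 0 ≤ γ) :
    diverg (fun w => g w ^ (1 + γ) • w) v = d * g v ^ (1 + γ) + (1 + γ) * g v ^ γ * L v := by
  rw [diverg_smul_id (hg.rpow_const (Or.inr (by linarith)))]
  simp

theorem diverg_mul_one_add_rpow_smul_id (hg : HasFDerivAt g L v) (hγ : 0 ≤ γ)
    (hnn : ∀ w, 0 ≤ g w) :
    diverg (fun w => (g w * (1 + g w ^ γ)) • w) v =
      d * (g v + g v ^ (1 + γ)) + (1 + (1 + γ) * g v ^ γ) * L v := by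
  have hsplit : ∀ w, g w * (1 + g w ^ γ) = g w + g w ^ (1 + γ) := fun w => by
    rw [rpow_add' (hnn w) (by linarith), rpow_one]; ring
  simp_rw [hsplit]
  have hsum := hg.add (hg.rpow_const (p := 1 + γ) (Or.inr (by linarith)))
  rw [diverg_smul_id (g := fun w => g w + g w ^ (1 + γ)) hsum]
  simp only [add_sub_cancel_left, add_apply, smul_apply, smul_eq_mul, add_right_inj]
  ring

end Divergence

section PartialDerivatives

variable {E F : Type*} [NormedAddCommGroup E] [NormedSpace ℝ E] [NormedAddCommGroup F]
  [NormedSpace ℝ F] {f : E × ℝ → F} {L : E × ℝ →L[ℝ] F} {s : Set ℝ} {x : E} {t : ℝ}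

theorem HasFDerivWithinAt.hasFDerivAt_comp_inl (hf : HasFDerivWithinAt f L (univ ×ˢ s) (x, t))
    (ht : t ∈ s) : HasFDerivAt (fun y => f (y, t)) (L.comp (.inl ℝ E ℝ)) x := by
  rw [← hasFDerivWithinAt_univ]
  exact hf.comp x (hasFDerivAt_prodMk_left x t).hasFDerivWithinAt
    (fun y _ => mk_mem_prod (mem_univ y) ht)

theorem HasFDerivWithinAt.hasDerivWithinAt_comp_inr
    (hf : HasFDerivWithinAt f L (univ ×ˢ s) (x, t)) :
    HasDerivWithinAt (fun r => f (x, r)) (L (0, 1)) s t :=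
  hf.comp_hasDerivWithinAt t ((hasDerivAt_const t x).prodMk (hasDerivAt_id t)).hasDerivWithinAt
    (fun _ hr => mk_mem_prod (mem_univ x) hr)

end PartialDerivatives

section LogTime

noncomputable def logTime (c t : ℝ) : ℝ := c⁻¹ * log (1 + c * t)

variable {c t : ℝ}

theorem logTime_zero (c : ℝ) : logTime c 0 = 0 := by simp [logTime]

theorem exp_mul_logTime (hc : c ≠ 0) (ht : 0 < 1 + c * t) :
    exp (c * logTime c t) = 1 + c * t := by
  rw [logTime, mul_inv_cancel_left₀ hc, exp_log ht]

theorem hasDerivAt_logTime (hc : c ≠ 0) (ht : 0 < 1 + c * t) :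
    HasDerivAt (logTime c) (exp (-(c * logTime c t))) t := by
  have hlog : HasDerivAt (fun s => log (1 + c * s)) (c / (1 + c * t)) t := by
    simpa using ((hasDerivAt_id t).const_mul c |>.const_add 1).log ht.ne'
  refine (hlog.const_mul c⁻¹).congr_deriv ?_
  rw [exp_neg, exp_mul_logTime hc ht]
  field_simp

theorem contDiffOn_logTime {n : WithTop ℕ∞} (hc : 0 ≤ c) :
    ContDiffOn ℝ n (logTime c) (Ici 0) :=
  contDiffOn_const.mul <| (contDiffOn_const.add (contDiffOn_const.mul contDiffOn_id)).log
    fun t ht => by simp only [id]; nlinarith [mem_Ici.mp ht]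

theorem mapsTo_logTime (hc : 0 < c) (T : ℝ) :
    MapsTo (logTime c) (Icc 0 ((exp (c * T) - 1) / c)) (Icc 0 T) := by
  rintro t ⟨ht0, htT⟩
  have hone : 1 ≤ 1 + c * t := by nlinarith
  have hexp : 1 + c * t ≤ exp (c * T) := by
    rw [le_div_iff₀ hc] at htT; linarith
  refine ⟨mul_nonneg (inv_nonneg.mpr hc.le) (log_nonneg hone), ?_⟩
  rw [logTime, inv_mul_le_iff₀ hc, ← log_exp (c * T)]
  exact log_le_log (by linarith) hexp

end LogTime

section MassScaling

variable {d : ℕ} {f : EuclideanSpace ℝ (Fin d) × ℝ → ℝ} {τ : ℝ → ℝ}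

noncomputable def massScaling (f : EuclideanSpace ℝ (Fin d) × ℝ → ℝ) (τ : ℝ → ℝ)
    (p : EuclideanSpace ℝ (Fin d) × ℝ) : ℝ :=
  exp (-(d * τ p.2)) * f (exp (-τ p.2) • p.1, τ p.2)

theorem massScaling_apply_zero (hτ : τ 0 = 0) (x : EuclideanSpace ℝ (Fin d)) :
    massScaling f τ (x, 0) = f (x, 0) := by
  simp [massScaling, hτ]

theorem ContDiffOn.massScaling {n : WithTop ℕ∞} {s s' : Set ℝ}
    (hf : ContDiffOn ℝ n f (univ ×ˢ s)) (hτ : ContDiffOn ℝ n τ s') (hmaps : MapsTo τ s' s) :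
    ContDiffOn ℝ n (massScaling f τ) (univ ×ˢ s') := by
  have hτ' : ContDiffOn ℝ n (fun p : EuclideanSpace ℝ (Fin d) × ℝ => τ p.2) (univ ×ˢ s') :=
    hτ.comp contDiffOn_snd fun p hp => hp.2
  have hpoint := (hτ'.neg.exp.smul contDiffOn_fst).prodMk hτ'
  exact (contDiffOn_const.mul hτ').neg.exp.mul
    (hf.comp hpoint fun p hp => mk_mem_prod (mem_univ _) (hmaps hp.2))

variable {L : EuclideanSpace ℝ (Fin d) × ℝ →L[ℝ] ℝ} {s s' : Set ℝ}
  {x : EuclideanSpace ℝ (Fin d)} {t b : ℝ}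

theorem hasFDerivAt_massScaling_fst
    (hf : HasFDerivWithinAt f L (univ ×ˢ s) (exp (-τ t) • x, τ t)) (ht : τ t ∈ s) :
    HasFDerivAt (fun y => massScaling f τ (y, t))
      ((exp (-(d * τ t)) * exp (-τ t)) • L.comp (.inl ℝ _ ℝ)) x := by
  have hscale := (hasFDerivAt_id (𝕜 := ℝ) x).const_smul (exp (-τ t))
  refine (((hf.hasFDerivAt_comp_inl ht).comp x hscale).const_mul
    (exp (-(d * τ t)))).congr_fderiv ?_
  ext y
  simp [mul_assoc]

theorem hasDerivWithinAt_massScaling_snd (hτ : HasDerivAt τ b t) (hmaps : MapsTo τ s' s)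
    (hf : HasFDerivWithinAt f L (univ ×ˢ s) (exp (-τ t) • x, τ t)) :
    HasDerivWithinAt (fun r => massScaling f τ (x, r))
      (b * exp (-(d * τ t)) * (L (0, 1) - d * f (exp (-τ t) • x, τ t) - exp (-τ t) * L (x, 0)))
      s' t := by
  have hpath : HasDerivAt (fun r => (exp (-τ r) • x, τ r)) ((exp (-τ t) * -b) • x, b) t :=
    (hτ.neg.exp.smul_const x).prodMk hτ
  have hf_path := hf.comp_hasDerivWithinAt t hpath.hasDerivWithinAt
    fun r hr => mk_mem_prod (mem_univ _) (hmaps hr)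
  refine ((hτ.const_mul (d : ℝ)).neg.exp.hasDerivWithinAt.mul hf_path).congr_deriv ?_
  have hsplit : (((exp (-τ t) * -b) • x, b) : EuclideanSpace ℝ (Fin d) × ℝ) =
      (exp (-τ t) * -b) • (x, 0) + b • (0, 1) := by ext <;> simp
  rw [hsplit, map_add, map_smul, map_smul, smul_eq_mul, smul_eq_mul]
  simp only [Pi.neg_apply, Function.comp_apply]
  ring

theorem massScaling_drift_eq {γ : ℝ} (hγ : 0 ≤ γ) (hnn : ∀ p, 0 ≤ f p)
    (hf : DifferentiableWithinAt ℝ f (univ ×ˢ s) (exp (-τ t) • x, τ t))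
    (hτ : HasDerivAt τ (exp (-(d * γ * τ t))) t) (hmaps : MapsTo τ s' s) (ht : t ∈ s')
    (hs : UniqueDiffWithinAt ℝ s (τ t)) (hs' : UniqueDiffWithinAt ℝ s' t)
    (hpde : derivWithin (fun r => f (exp (-τ t) • x, r)) s (τ t) =
      diverg (fun w => (f (w, τ t) * (1 + f (w, τ t) ^ γ)) • w) (exp (-τ t) • x)) :
    derivWithin (fun r => massScaling f τ (x, r)) s' t
      - diverg (fun y => massScaling f τ (y, t) ^ (1 + γ) • y) x = 0 := by
  set a := exp (-τ t)
  set A := exp (-(d * τ t))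
  set F := f (a • x, τ t)
  set L := fderivWithin ℝ f (univ ×ˢ s) (a • x, τ t)
  have hL : HasFDerivWithinAt f L (univ ×ˢ s) (a • x, τ t) := hf.hasFDerivWithinAt
  have hLx : L (a • x, 0) = a * L (x, 0) := by
    rw [← smul_eq_mul, ← map_smul, Prod.smul_mk, smul_zero]
  have hft : L (0, 1) = d * (F + F ^ (1 + γ)) + (1 + (1 + γ) * F ^ γ) * (a * L (x, 0)) := by
    rw [← (hL.hasDerivWithinAt_comp_inr).derivWithin hs, hpde,
      diverg_mul_one_add_rpow_smul_id (hL.hasFDerivAt_comp_inl (hmaps ht)) hγ fun w => hnn _,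
      ContinuousLinearMap.comp_apply, ContinuousLinearMap.inl_apply, hLx]
  have hAγ : A ^ γ = exp (-(d * γ * τ t)) := by
    rw [← exp_mul]; ring_nf
  rw [(hasDerivWithinAt_massScaling_snd hτ hmaps hL).derivWithin hs',
    diverg_rpow_smul_id (hasFDerivAt_massScaling_fst hL (hmaps ht)) hγ]
  simp only [massScaling]
  rw [mul_rpow (exp_pos _).le (hnn _), mul_rpow (exp_pos _).le (hnn _),
    rpow_add' (exp_pos _).le (by linarith), rpow_one, hAγ, hft]
  simp only [smul_apply, ContinuousLinearMap.comp_apply, ContinuousLinearMap.inl_apply, smul_eq_mul]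
  ring

end MassScaling

/-- The time-dependent mass-preserving scaling `ρ(x,t) = e^{−dτ(t)} f(e^{−τ(t)}x, τ(t))`,
`τ(t) = (dγ)⁻¹ log(1+dγt)`, transforms a nonnegative `C¹` solution of
`∂_τ f = div_v(v f(1+f^γ))` into a `C¹` solution of `∂_t ρ − div_x(x ρ^{1+γ}) = 0`
with `ρ(·,0) = f(·,0)`. -/
theorem scaling_removes_linear_drift (d : ℕ) (hd : 1 ≤ d) (γ : ℝ) (hγ : 0 < γ)
    (T : ℝ) (hT : 0 < T) (f : EuclideanSpace ℝ (Fin d) × ℝ → ℝ)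
    (hC1 : ContDiffOn ℝ 1 f (univ ×ˢ Icc 0 T))
    (hnn : ∀ p, 0 ≤ f p)
    (hpde : ∀ v : EuclideanSpace ℝ (Fin d), ∀ τ ∈ Icc (0:ℝ) T,
      derivWithin (fun s => f (v, s)) (Icc 0 T) τ =
        diverg (fun w => (f (w, τ) * (1 + f (w, τ) ^ γ)) • w) v) :
    let T' : ℝ := (Real.exp ((d:ℝ)*γ*T) - 1) / ((d:ℝ)*γ)
    let τof : ℝ → ℝ := fun t => ((d:ℝ)*γ)⁻¹ * Real.log (1 + (d:ℝ)*γ*t)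
    let ρ : EuclideanSpace ℝ (Fin d) × ℝ → ℝ :=
      fun p => Real.exp (-((d:ℝ) * τof p.2)) * f (Real.exp (-(τof p.2)) • p.1, τof p.2)
    ContDiffOn ℝ 1 ρ (univ ×ˢ Icc 0 T') ∧
    (∀ x, ρ (x, 0) = f (x, 0)) ∧
    (∀ x : EuclideanSpace ℝ (Fin d), ∀ t ∈ Icc (0:ℝ) T',
      derivWithin (fun s => ρ (x, s)) (Icc 0 T') t
        - diverg (fun y => ((ρ (y, t)) ^ (1+γ)) • y) x = 0) := by
  intro T' τof ρ
  have hc : 0 < (d : ℝ) * γ := mul_pos (by exact_mod_cast hd) hγ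
  have hcT : 0 < (d : ℝ) * γ * T := mul_pos hc hT
  have hT' : 0 < T' := div_pos (by linarith [add_one_lt_exp hcT.ne']) hc
  have hmaps : MapsTo τof (Icc 0 T') (Icc 0 T) := mapsTo_logTime hc T
  refine ⟨hC1.massScaling ((contDiffOn_logTime hc.le).mono Icc_subset_Ici_self) hmaps,
    massScaling_apply_zero (logTime_zero _), fun x t ht => ?_⟩
  have hτt := hmaps ht
  exact massScaling_drift_eq hγ.le hnn
    (hC1.differentiableOn one_ne_zero _ (mk_mem_prod (mem_univ _) hτt))
    (hasDerivAt_logTime hc.ne' (by nlinarith [ht.1])) hmaps ht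
    (uniqueDiffOn_Icc hT _ hτt) (uniqueDiffOn_Icc hT' t ht) (hpde _ _ hτt)
end

section
/- Let γ > 0, T > 0, and let ρ ∈ C¹(ℝ × [0,T]) be a nonnegative bounded solution of ∂_t ρ − ∂_x(x ρ^{1+γ}) = 0, with ρ(·,t) integrable for each t. Define u(ξ,t) = (γ|ξ|)^{1/γ} ρ(sign(ξ)(γ|ξ|)^{(1+γ)/γ}/(1+γ), t). Then for every ξ ≠ 0 and t ∈ (0,T), u satisfies pointwise ∂_t u − sign(ξ) ∂_ξ(u^{1+γ}/(1+γ)) = 0, and for every t, ∫_0^∞ u(ξ,t) dξ = ∫_0^∞ ρ(x,t) dx and ∫_{−∞}^0 u(ξ,t) dξ = ∫_{−∞}^0 ρ(x,t) dx. -/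
/-!
Since `x'(ξ)^{1+γ} = (1+γ)|x(ξ)|`, the new flux `u^{1+γ}/(1+γ)` is `sign ξ · (x ρ^{1+γ}) ∘ x`,
so by the chain rule its `ξ`-derivative is `sign ξ · x'(ξ) · ∂ₓ(x ρ^{1+γ})`; multiplying the
equation for `ρ` by `x'(ξ)` gives the conservation law. The masses agree because `u dξ = ρ dx`
is the change of variables along `x`, an increasing bijection of each half-line.
-/

open Real Set MeasureTheory Filter Topology

theorem Real.sign_eventuallyEq {ξ : ℝ} (hξ : ξ ≠ 0) : ∀ᶠ η in 𝓝 ξ, sign η = sign ξ := by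
  rcases hξ.lt_or_gt with h | h
  · filter_upwards [Iio_mem_nhds h] with η hη
    rw [sign_of_neg hη, sign_of_neg h]
  · filter_upwards [Ioi_mem_nhds h] with η hη
    rw [sign_of_pos hη, sign_of_pos h]

theorem Real.sign_mul_sign_of_ne_zero {ξ : ℝ} (hξ : ξ ≠ 0) : sign ξ * sign ξ = 1 := by
  rcases hξ.lt_or_gt with h | h
  · rw [sign_of_neg h]; norm_num
  · rw [sign_of_pos h]; norm_num

theorem Real.hasDerivAt_abs_sign {ξ : ℝ} (hξ : ξ ≠ 0) : HasDerivAt (|·|) (sign ξ) ξ := by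
  rcases hξ.lt_or_gt with h | h
  · simpa [sign_of_neg h] using hasDerivAt_abs_neg h
  · simpa [sign_of_pos h] using hasDerivAt_abs_pos h

theorem HasDerivAt.sign_mul_comp_abs {G : ℝ → ℝ} {G' ξ : ℝ} (hξ : ξ ≠ 0)
    (hG : HasDerivAt G G' |ξ|) : HasDerivAt (fun η => sign η * G |η|) G' ξ := by
  have hsign_frozen : HasDerivAt (fun η => sign ξ * G |η|) (sign ξ * (G' * sign ξ)) ξ :=
    (hG.comp ξ (hasDerivAt_abs_sign hξ)).const_mul (sign ξ)
  refine (hsign_frozen.congr_of_eventuallyEq ?_).congr_deriv ?_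
  · filter_upwards [sign_eventuallyEq hξ] with η hη
    rw [hη]
  · linear_combination G' * sign_mul_sign_of_ne_zero hξ

theorem differentiableAt_left_of_contDiffOn_univ_prod {𝕜 E F G : Type*}
    [NontriviallyNormedField 𝕜] [NormedAddCommGroup E] [NormedSpace 𝕜 E]
    [NormedAddCommGroup F] [NormedSpace 𝕜 F] [NormedAddCommGroup G] [NormedSpace 𝕜 G]
    {f : E → F → G} {s : Set F} {n : WithTop ℕ∞} {t : F}
    (hf : ContDiffOn 𝕜 n (fun p : E × F => f p.1 p.2) (univ ×ˢ s)) (hn : n ≠ 0) (ht : s ∈ 𝓝 t)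
    (x : E) : DifferentiableAt 𝕜 (fun y => f y t) x :=
  ((hf.differentiableOn hn (x, t) ⟨mem_univ x, mem_of_mem_nhds ht⟩).differentiableAt
    (prod_mem_nhds univ_mem ht)).comp (g := fun p : E × F => f p.1 p.2)
    (f := fun y => (y, t)) x
    (differentiableAt_id.prodMk (differentiableAt_const t))

/-- The paper's `x(ξ)`; `changeVarDeriv γ ξ` is `x'(ξ)`. -/
noncomputable def changeVar (γ ξ : ℝ) : ℝ := sign ξ * (γ * |ξ|) ^ ((1 + γ) / γ) / (1 + γ)

noncomputable def changeVarDeriv (γ ξ : ℝ) : ℝ := (γ * |ξ|) ^ (1 / γ)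

section ChangeVar

variable {γ : ℝ}

theorem hasDerivAt_mul_rpow_div_one_add (hγ : 0 < γ) {r : ℝ} (hr : 0 < r) :
    HasDerivAt (fun r => (γ * r) ^ ((1 + γ) / γ) / (1 + γ)) ((γ * r) ^ (1 / γ)) r := by
  have hinner : HasDerivAt (fun r => γ * r) γ r := by
    simpa using (hasDerivAt_id r).const_mul γ
  refine (((hasDerivAt_rpow_const (Or.inl (mul_pos hγ hr).ne')).comp r hinner).div_const
    (1 + γ)).congr_deriv ?_
  have hexp : (1 + γ) / γ - 1 = 1 / γ := by field_simp; ring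
  rw [hexp]
  field_simp

theorem hasDerivAt_changeVar (hγ : 0 < γ) {ξ : ℝ} (hξ : ξ ≠ 0) :
    HasDerivAt (changeVar γ) (changeVarDeriv γ ξ) ξ := by
  have h := (hasDerivAt_mul_rpow_div_one_add hγ (abs_pos.2 hξ)).sign_mul_comp_abs hξ
  rwa [show changeVar γ = fun η => sign η * ((γ * |η|) ^ ((1 + γ) / γ) / (1 + γ)) from
    funext fun η => mul_div_assoc _ _ _]

theorem changeVarDeriv_mul_rpow_div (hγ : 0 < γ) {ξ r : ℝ} (hξ : ξ ≠ 0) (hr : 0 ≤ r) :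
    (changeVarDeriv γ ξ * r) ^ (1 + γ) / (1 + γ) = sign ξ * (changeVar γ ξ * r ^ (1 + γ)) := by
  have hbase : 0 ≤ γ * |ξ| := by positivity
  rw [changeVarDeriv, changeVar, mul_rpow (rpow_nonneg hbase _) hr, ← rpow_mul hbase,
    one_div_mul_eq_div]
  linear_combination (-((γ * |ξ|) ^ ((1 + γ) / γ) * r ^ (1 + γ) / (1 + γ))) *
    sign_mul_sign_of_ne_zero hξ

theorem deriv_changeVar_flux (hγ : 0 < γ) {ξ : ℝ} (hξ : ξ ≠ 0) {f : ℝ → ℝ}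
    (hf₀ : ∀ x, 0 ≤ f x) (hf : DifferentiableAt ℝ f (changeVar γ ξ)) :
    deriv (fun η => (changeVarDeriv γ η * f (changeVar γ η)) ^ (1 + γ) / (1 + γ)) ξ
      = sign ξ * (deriv (fun x => x * f x ^ (1 + γ)) (changeVar γ ξ) * changeVarDeriv γ ξ) := by
  have hflux : DifferentiableAt ℝ (fun x => x * f x ^ (1 + γ)) (changeVar γ ξ) :=
    differentiableAt_id.mul (hf.rpow_const (Or.inr (by linarith)))
  have hpullback : (fun η => (changeVarDeriv γ η * f (changeVar γ η)) ^ (1 + γ) / (1 + γ))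
      =ᶠ[𝓝 ξ] fun η => sign ξ * (changeVar γ η * f (changeVar γ η) ^ (1 + γ)) := by
    filter_upwards [sign_eventuallyEq hξ, eventually_ne_nhds hξ] with η hsign hη
    rw [changeVarDeriv_mul_rpow_div hγ hη (hf₀ _), hsign]
  rw [hpullback.deriv_eq, deriv_const_mul_field]
  exact congrArg (sign ξ * ·) (hflux.hasDerivAt.comp ξ (hasDerivAt_changeVar hγ hξ)).deriv

theorem changeVar_of_pos {ξ : ℝ} (hξ : 0 < ξ) :
    changeVar γ ξ = (γ * ξ) ^ ((1 + γ) / γ) / (1 + γ) := by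
  rw [changeVar, sign_of_pos hξ, abs_of_pos hξ, one_mul]

theorem changeVar_neg (ξ : ℝ) : changeVar γ (-ξ) = -changeVar γ ξ := by
  rw [changeVar, changeVar, sign_neg, abs_neg, neg_mul, neg_div]

theorem changeVarDeriv_neg (ξ : ℝ) : changeVarDeriv γ (-ξ) = changeVarDeriv γ ξ := by
  rw [changeVarDeriv, changeVarDeriv, abs_neg]

theorem changeVarDeriv_nonneg (hγ : 0 ≤ γ) (ξ : ℝ) : 0 ≤ changeVarDeriv γ ξ :=
  rpow_nonneg (by positivity) _

theorem strictMonoOn_changeVar (hγ : 0 < γ) : StrictMonoOn (changeVar γ) (Ioi 0) := by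
  intro a ha b hb hab
  rw [changeVar_of_pos ha, changeVar_of_pos hb]
  gcongr
  exact (mul_pos hγ ha).le

theorem changeVar_image_Ioi (hγ : 0 < γ) : changeVar γ '' Ioi 0 = Ioi 0 := by
  have h1γ : 0 < 1 + γ := by linarith
  refine Subset.antisymm ?_ fun x (hx : 0 < x) => ?_
  · rintro _ ⟨ξ, hξ, rfl⟩
    rw [changeVar_of_pos hξ]
    exact div_pos (rpow_pos_of_pos (mul_pos hγ hξ) _) h1γ
  · have hy : 0 < ((1 + γ) * x) ^ (γ / (1 + γ)) / γ :=
      div_pos (rpow_pos_of_pos (mul_pos h1γ hx) _) hγ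
    have hexp : γ / (1 + γ) * ((1 + γ) / γ) = 1 := by field_simp
    refine ⟨_, hy, ?_⟩
    rw [changeVar_of_pos hy, mul_div_cancel₀ _ hγ.ne', ← rpow_mul (mul_pos h1γ hx).le, hexp,
      rpow_one, mul_div_cancel_left₀ x h1γ.ne']

variable {E : Type*} [NormedAddCommGroup E] [NormedSpace ℝ E]

theorem integral_Ioi_changeVarDeriv_smul (hγ : 0 < γ) (g : ℝ → E) :
    ∫ ξ in Ioi 0, changeVarDeriv γ ξ • g (changeVar γ ξ) = ∫ x in Ioi 0, g x := by
  have h := integral_image_eq_integral_abs_deriv_smul measurableSet_Ioi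
    (fun ξ (hξ : 0 < ξ) => (hasDerivAt_changeVar hγ hξ.ne').hasDerivWithinAt)
    (strictMonoOn_changeVar hγ).injOn g
  rw [changeVar_image_Ioi hγ] at h
  rw [h]
  refine setIntegral_congr_fun measurableSet_Ioi fun ξ _ => ?_
  rw [abs_of_nonneg (changeVarDeriv_nonneg hγ.le ξ)]

theorem integral_Iio_changeVarDeriv_smul (hγ : 0 < γ) (g : ℝ → E) :
    ∫ ξ in Iio 0, changeVarDeriv γ ξ • g (changeVar γ ξ) = ∫ x in Iio 0, g x := by
  have hreflect (f : ℝ → E) : ∫ x in Iio 0, f x = ∫ x in Ioi 0, f (-x) := by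
    rw [integral_comp_neg_Ioi, neg_zero, integral_Iic_eq_integral_Iio]
  simp only [hreflect, changeVarDeriv_neg, changeVar_neg]
  exact integral_Ioi_changeVarDeriv_smul hγ (fun x => g (-x))

end ChangeVar

theorem change_of_variables_to_conservation_law_general (γ : ℝ) (hγ : 0 < γ) (T : ℝ)
    (ρ : ℝ → ℝ → ℝ)
    (hC1 : ContDiffOn ℝ 1 (fun p : ℝ × ℝ => ρ p.1 p.2) (univ ×ˢ Icc 0 T))
    (hnn : ∀ x t, 0 ≤ ρ x t)
    (hpde : ∀ x : ℝ, ∀ t ∈ Icc (0:ℝ) T,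
      derivWithin (fun s => ρ x s) (Icc 0 T) t
        - deriv (fun y => y * (ρ y t) ^ (1+γ)) x = 0) :
    let u : ℝ → ℝ → ℝ := fun ξ t =>
      (γ*|ξ|) ^ (1/γ) * ρ (Real.sign ξ * (γ*|ξ|) ^ ((1+γ)/γ) / (1+γ)) t
    (∀ ξ : ℝ, ξ ≠ 0 → ∀ t ∈ Ioo (0:ℝ) T,
      deriv (fun s => u ξ s) t
        - Real.sign ξ * deriv (fun η => (u η t) ^ (1+γ) / (1+γ)) ξ = 0) ∧
    (∀ t ∈ Icc (0:ℝ) T,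
      (∫ ξ in Ioi (0:ℝ), u ξ t) = (∫ x in Ioi (0:ℝ), ρ x t) ∧
      (∫ ξ in Iio (0:ℝ), u ξ t) = (∫ x in Iio (0:ℝ), ρ x t)) := by
  intro u
  refine ⟨fun ξ hξ t ht => ?_, fun t _ => ⟨?_, ?_⟩⟩
  · have hinterior : Icc 0 T ∈ 𝓝 t := Icc_mem_nhds ht.1 ht.2
    have htime : deriv (fun s => u ξ s) t
        = changeVarDeriv γ ξ * derivWithin (fun s => ρ (changeVar γ ξ) s) (Icc 0 T) t := by
      rw [derivWithin_of_mem_nhds hinterior]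
      exact deriv_const_mul_field _
    have hspace : deriv (fun η => (u η t) ^ (1 + γ) / (1 + γ)) ξ
        = sign ξ * (deriv (fun x => x * ρ x t ^ (1 + γ)) (changeVar γ ξ) * changeVarDeriv γ ξ) :=
      deriv_changeVar_flux hγ hξ (hnn · t)
        (differentiableAt_left_of_contDiffOn_univ_prod hC1 one_ne_zero hinterior _)
    rw [htime, hspace]
    linear_combination changeVarDeriv γ ξ * hpde _ t (Ioo_subset_Icc_self ht)
      - deriv (fun x => x * ρ x t ^ (1 + γ)) (changeVar γ ξ) * changeVarDeriv γ ξ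
        * sign_mul_sign_of_ne_zero hξ
  · exact integral_Ioi_changeVarDeriv_smul hγ (ρ · t)
  · exact integral_Iio_changeVarDeriv_smul hγ (ρ · t)

/-- The change of variables `u(ξ,t) = (γ|ξ|)^{1/γ} ρ(sign(ξ)(γ|ξ|)^{(1+γ)/γ}/(1+γ), t)`
maps a bounded `C¹` solution `ρ` of `∂_t ρ − ∂_x(xρ^{1+γ}) = 0` to a solution of the
conservation law `∂_t u − sign(ξ) ∂_ξ(u^{1+γ}/(1+γ)) = 0`, preserving the mass on each
half-line. -/
theorem change_of_variables_to_conservation_law (γ : ℝ) (hγ : 0 < γ) (T : ℝ) (hT : 0 < T)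
    (ρ : ℝ → ℝ → ℝ)
    (hC1 : ContDiffOn ℝ 1 (fun p : ℝ × ℝ => ρ p.1 p.2) (univ ×ˢ Icc 0 T))
    (hnn : ∀ x t, 0 ≤ ρ x t)
    (hbdd : ∃ C : ℝ, ∀ x t, ρ x t ≤ C)
    (hint : ∀ t ∈ Icc (0:ℝ) T, Integrable (fun x => ρ x t))
    (hpde : ∀ x : ℝ, ∀ t ∈ Icc (0:ℝ) T,
      derivWithin (fun s => ρ x s) (Icc 0 T) t
        - deriv (fun y => y * (ρ y t) ^ (1+γ)) x = 0) :
    let u : ℝ → ℝ → ℝ := fun ξ t =>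
      (γ*|ξ|) ^ (1/γ) * ρ (Real.sign ξ * (γ*|ξ|) ^ ((1+γ)/γ) / (1+γ)) t
    (∀ ξ : ℝ, ξ ≠ 0 → ∀ t ∈ Ioo (0:ℝ) T,
      deriv (fun s => u ξ s) t
        - Real.sign ξ * deriv (fun η => (u η t) ^ (1+γ) / (1+γ)) ξ = 0) ∧
    (∀ t ∈ Icc (0:ℝ) T,
      (∫ ξ in Ioi (0:ℝ), u ξ t) = (∫ x in Ioi (0:ℝ), ρ x t) ∧
      (∫ ξ in Iio (0:ℝ), u ξ t) = (∫ x in Iio (0:ℝ), ρ x t)) :=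
  change_of_variables_to_conservation_law_general γ hγ T ρ hC1 hnn hpde
end

section
/- Let γ > 0. (a) The function X_A(z,t) = z(1 − γt)^{1/γ} satisfies pointwise ∂_t X (∂_z X)^γ + X = 0 for all z ∈ (0,1) and 0 ≤ t < 1/γ. (b) The function X_B(z,t) = [1 − (γ t)^{1/(1+γ)}(1 − z)^{γ/(1+γ)}]^{(1+γ)/γ} satisfies pointwise ∂_t X (∂_z X)^γ + X = 0 at every (z,t) with z ∈ (0,1), t > 0 and 1 − (γ t)^{1/(1+γ)}(1 − z)^{γ/(1+γ)} > 0. (c) For 0 < t < 1/γ, the two profiles match in a C¹ way at z = 1 − γt: X_A(1−γt, t) = X_B(1−γt, t) and ∂_z X_A(1−γt, t) = ∂_z X_B(1−γt, t) = (1 − γt)^{1/γ}. -/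
open Real

/-!
Both profiles are checked by direct differentiation. For region B the key is the power
substitution `X = u ^ ((1+γ)/γ)`: since `((1+γ)/γ - 1) (1+γ) = (1+γ)/γ`, one gets
`X_t X_z^γ + X = u^((1+γ)/γ) (1 + ((1+γ)/γ)^(1+γ) u_t u_z^γ)`, and for the bracket
`u = 1 - (γt)^(1/(1+γ)) (1-z)^(γ/(1+γ))` the exponents of `γt` and `1-z` in `u_t u_z^γ`
cancel, leaving the constant `-(γ/(1+γ))^(1+γ)`. On the free boundary `1 - z = γt` the bracket
collapses to `1 - γt`, which gives the `C¹` matching.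
-/

section

variable {γ : ℝ}

theorem one_add_div_sub_one (hγ : γ ≠ 0) : (1 + γ) / γ - 1 = 1 / γ := by
  field_simp; ring

theorem hasDerivAt_mul_one_sub_mul_rpow (hγ : γ ≠ 0) (z : ℝ) {t : ℝ} (ht : 0 < 1 - γ * t) :
    HasDerivAt (fun s => z * (1 - γ * s) ^ (1 / γ)) (-(z * (1 - γ * t) ^ (1 / γ - 1))) t := by
  have h := (((hasDerivAt_id' t).const_mul γ).const_sub 1).rpow_const (p := 1 / γ) (Or.inl ht.ne')
  refine (h.const_mul z).congr_deriv ?_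
  field_simp

theorem separable_profile_solves {z t : ℝ} (hγ : γ ≠ 0) (ht : 0 < 1 - γ * t) :
    -(z * (1 - γ * t) ^ (1 / γ - 1)) * ((1 - γ * t) ^ (1 / γ)) ^ γ
      + z * (1 - γ * t) ^ (1 / γ) = 0 := by
  rw [one_div, rpow_inv_rpow ht.le hγ, rpow_sub_one ht.ne']
  field_simp
  ring

theorem hasDerivAt_bracket_time {t : ℝ} (Q : ℝ) (ht : 0 < γ * t) (hγ : 1 + γ ≠ 0) :
    HasDerivAt (fun s => 1 - (γ * s) ^ (1 / (1 + γ)) * Q)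
      (-(γ / (1 + γ) * (γ * t) ^ (1 / (1 + γ) - 1) * Q)) t := by
  have h := ((hasDerivAt_id' t).const_mul γ).rpow_const (p := 1 / (1 + γ)) (Or.inl ht.ne')
  refine ((h.mul_const Q).const_sub 1).congr_deriv ?_
  field_simp

theorem hasDerivAt_bracket_space {z : ℝ} (P : ℝ) (hz : z < 1) :
    HasDerivAt (fun w => 1 - P * (1 - w) ^ (γ / (1 + γ)))
      (γ / (1 + γ) * P * (1 - z) ^ (γ / (1 + γ) - 1)) z := by
  have h := ((hasDerivAt_id' z).const_sub 1).rpow_const (p := γ / (1 + γ))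
    (Or.inl (sub_pos.2 hz).ne')
  refine ((h.const_mul P).const_sub 1).congr_deriv ?_
  ring

theorem bracket_time_mul_space_rpow {P Q : ℝ} (hγ : 0 < γ) (hP : 0 < P) (hQ : 0 < Q) :
    -(γ / (1 + γ) * P ^ (1 / (1 + γ) - 1) * Q ^ (γ / (1 + γ)))
        * (γ / (1 + γ) * P ^ (1 / (1 + γ)) * Q ^ (γ / (1 + γ) - 1)) ^ γ
      = -(γ / (1 + γ)) ^ (1 + γ) := by
  have hb : 0 < γ / (1 + γ) := by positivity
  rw [mul_rpow (by positivity) (by positivity), mul_rpow hb.le (by positivity),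
    ← rpow_mul hP.le, ← rpow_mul hQ.le]
  calc -(γ / (1 + γ) * P ^ (1 / (1 + γ) - 1) * Q ^ (γ / (1 + γ)))
        * ((γ / (1 + γ)) ^ γ * P ^ (1 / (1 + γ) * γ) * Q ^ ((γ / (1 + γ) - 1) * γ))
      = -((γ / (1 + γ)) ^ (1 : ℝ) * (γ / (1 + γ)) ^ γ)
          * (P ^ (1 / (1 + γ) - 1) * P ^ (1 / (1 + γ) * γ))
          * (Q ^ (γ / (1 + γ)) * Q ^ ((γ / (1 + γ) - 1) * γ)) := by rw [rpow_one]; ring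
    _ = -(γ / (1 + γ)) ^ (1 + γ) * P ^ (0 : ℝ) * Q ^ (0 : ℝ) := by
        rw [← rpow_add hb, ← rpow_add hP, ← rpow_add hQ]
        congr 4 <;> field_simp <;> ring
    _ = -(γ / (1 + γ)) ^ (1 + γ) := by simp

/-- The power substitution `X = u ^ ((1+γ)/γ)`, with the chain rule written out for both
partial derivatives. -/
theorem rpow_substitution_solves {u ut uz : ℝ} (hγ : 0 < γ) (hu : 0 < u) (huz : 0 ≤ uz)
    (h : ut * uz ^ γ = -(γ / (1 + γ)) ^ (1 + γ)) :
    ut * ((1 + γ) / γ) * u ^ ((1 + γ) / γ - 1)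
        * (uz * ((1 + γ) / γ) * u ^ ((1 + γ) / γ - 1)) ^ γ + u ^ ((1 + γ) / γ) = 0 := by
  have hβu : u ^ (1 / γ) * u = u ^ ((1 + γ) / γ) := by
    rw [← rpow_add_one hu.ne']; congr 1; field_simp
  have hβc : (γ / (1 + γ)) ^ (1 + γ) * (((1 + γ) / γ) ^ γ * ((1 + γ) / γ)) = 1 := by
    rw [← rpow_add_one (by positivity), add_comm γ, ← mul_rpow (by positivity) (by positivity),
      div_mul_div_cancel₀ (by positivity), div_self hγ.ne', one_rpow]
  rw [one_add_div_sub_one hγ.ne', mul_rpow (by positivity) (by positivity),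
    mul_rpow huz (by positivity), one_div, rpow_inv_rpow hu.le hγ.ne', ← one_div, ← hβu]
  linear_combination (((1 + γ) / γ) ^ γ * ((1 + γ) / γ) * u ^ (1 / γ) * u) * h
    - u ^ (1 / γ) * u * hβc

theorem bracket_at_free_boundary {t : ℝ} (hγ : 1 + γ ≠ 0) (ht : 0 < γ * t) :
    1 - (γ * t) ^ (1 / (1 + γ)) * (1 - (1 - γ * t)) ^ (γ / (1 + γ)) = 1 - γ * t := by
  rw [sub_sub_cancel, ← rpow_add ht, ← add_div, div_self hγ, rpow_one]

theorem bracket_space_deriv_at_free_boundary {P : ℝ} (hγ : 0 < γ) (hP : 0 < P) :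
    γ / (1 + γ) * P ^ (1 / (1 + γ)) * P ^ (γ / (1 + γ) - 1) * ((1 + γ) / γ) = 1 := by
  have hPP : P ^ (1 / (1 + γ)) * P ^ (γ / (1 + γ) - 1) = 1 := by
    rw [← rpow_add hP, show 1 / (1 + γ) + (γ / (1 + γ) - 1) = 0 by field_simp; ring, rpow_zero]
  calc γ / (1 + γ) * P ^ (1 / (1 + γ)) * P ^ (γ / (1 + γ) - 1) * ((1 + γ) / γ)
      = γ / (1 + γ) * ((1 + γ) / γ) * (P ^ (1 / (1 + γ)) * P ^ (γ / (1 + γ) - 1)) := by ring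
    _ = 1 := by rw [hPP]; field_simp

end

/-- The explicit solution of the pseudo-inverse equation `X_t X_z^γ + X = 0` with initial
datum `X(z,0) = z`: (a) `X_A(z,t) = z(1−γt)^{1/γ}` solves the equation on region A;
(b) `X_B(z,t) = [1 − (γt)^{1/(1+γ)}(1−z)^{γ/(1+γ)}]^{(1+γ)/γ}` solves it where the bracket
is positive; (c) for `0 < t < 1/γ` the two profiles match in a `C¹` way at `z = 1 − γt`,
with common derivative `(1−γt)^{1/γ}`. -/
theorem explicit_pseudo_inverse_solution (γ : ℝ) (hγ : 0 < γ) :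
    (∀ z t : ℝ, z ∈ Set.Ioo (0:ℝ) 1 → 0 ≤ t → t < 1/γ →
      deriv (fun s => z * (1-γ*s) ^ (1/γ)) t * (deriv (fun w => w * (1-γ*t) ^ (1/γ)) z) ^ γ
        + z * (1-γ*t) ^ (1/γ) = 0) ∧
    (∀ z t : ℝ, z ∈ Set.Ioo (0:ℝ) 1 → 0 < t →
      0 < 1 - (γ*t) ^ (1/(1+γ)) * (1-z) ^ (γ/(1+γ)) →
      deriv (fun s => (1 - (γ*s) ^ (1/(1+γ)) * (1-z) ^ (γ/(1+γ))) ^ ((1+γ)/γ)) t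
        * (deriv (fun w => (1 - (γ*t) ^ (1/(1+γ)) * (1-w) ^ (γ/(1+γ))) ^ ((1+γ)/γ)) z) ^ γ
        + (1 - (γ*t) ^ (1/(1+γ)) * (1-z) ^ (γ/(1+γ))) ^ ((1+γ)/γ) = 0) ∧
    (∀ t : ℝ, 0 < t → t < 1/γ →
      (1-γ*t) * (1-γ*t) ^ (1/γ)
          = (1 - (γ*t) ^ (1/(1+γ)) * (1-(1-γ*t)) ^ (γ/(1+γ))) ^ ((1+γ)/γ) ∧
      deriv (fun w => w * (1-γ*t) ^ (1/γ)) (1-γ*t) = (1-γ*t) ^ (1/γ) ∧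
      deriv (fun w => (1 - (γ*t) ^ (1/(1+γ)) * (1-w) ^ (γ/(1+γ))) ^ ((1+γ)/γ)) (1-γ*t)
          = (1-γ*t) ^ (1/γ)) := by
  have hγ₁ : 1 + γ ≠ 0 := by positivity
  have below_one {t : ℝ} (ht : t < 1 / γ) : 0 < 1 - γ * t := by
    rw [lt_div_iff₀' hγ] at ht; linarith
  refine ⟨fun z t _ _ ht => ?_, fun z t hz ht hu => ?_, fun t ht₀ ht => ?_⟩
  · rw [(hasDerivAt_mul_one_sub_mul_rpow hγ.ne' z (below_one ht)).deriv,
      (hasDerivAt_mul_const _).deriv]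
    exact separable_profile_solves hγ.ne' (below_one ht)
  · have hP : 0 < γ * t := mul_pos hγ ht
    have hQ : 0 < 1 - z := sub_pos.2 hz.2
    rw [((hasDerivAt_bracket_time _ hP hγ₁).rpow_const (Or.inl hu.ne')).deriv,
      ((hasDerivAt_bracket_space _ hz.2).rpow_const (Or.inl hu.ne')).deriv]
    exact rpow_substitution_solves hγ hu (by positivity) (bracket_time_mul_space_rpow hγ hP hQ)
  · have hP : 0 < γ * t := mul_pos hγ ht₀
    have hu := bracket_at_free_boundary hγ₁ hP ▸ below_one ht
    refine ⟨?_, (hasDerivAt_mul_const _).deriv, ?_⟩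
    · rw [bracket_at_free_boundary hγ₁ hP, ← rpow_one_add' (below_one ht).le (by positivity)]
      congr 1; field_simp; ring
    · rw [((hasDerivAt_bracket_space _ (by linarith)).rpow_const (Or.inl hu.ne')).deriv,
        bracket_at_free_boundary hγ₁ hP, sub_sub_cancel,
        bracket_space_deriv_at_free_boundary hγ hP, one_mul, one_add_div_sub_one hγ.ne']
end
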